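/- Let f : [0,1] → [0,1] be continuous and let I ⊂ [0,1] be a closed interval such that f^n maps I homeomorphically into I for some n ≥ 1 (i.e., f^n restricted to I is injective, continuous, and f^n(I) ⊆ I). Then for every x ∈ I, the omega-limit set ω(x) of x under f is a periodic orbit of f. -/

import Mathlib

open Set Filter Topology Function

/-- The omega-limit set of `x` under `f`: accumulation points of the forward orbit. -/
def omegaLimitPt (f : ℝ → ℝ) (x : ℝ) : Set ℝ :=
  {y | ∃ φ : ℕ → ℕ, StrictMono φ ∧ Tendsto (fun k => f^[φ k] x) atTop (nhds y)}

/-- `S` is a periodic orbit of `f`. -/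
def IsPeriodicOrbitSet (f : ℝ → ℝ) (S : Set ℝ) : Prop :=
  ∃ (p : ℝ) (m : ℕ), 0 < m ∧ f^[m] p = p ∧ S = {y | ∃ i : ℕ, y = f^[i] p}

/-!
Some even iterate `g = f^[2n]` is a continuous increasing self-map of `I`, so the `g`-orbit of
`x` is monotone and converges to a fixed point `p` of `g`. By continuity, along each residue
class `i mod 2n` the `f`-orbit of `x` converges to `f^[i] p`, and these are its only
accumulation points.
-/

theorem ContinuousOn.isFixedPt_of_tendsto_iterate {α : Type*} [TopologicalSpace α] [T2Space α]
    {g : α → α} {s : Set α} {x p : α} (hg : ContinuousOn g s) (hs : MapsTo g s s) (hx : x ∈ s)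
    (hp : p ∈ s) (h : Tendsto (fun k => g^[k] x) atTop (𝓝 p)) : IsFixedPt g p := by
  have h_orbit : ∀ k, g^[k] x ∈ s := fun k => hs.iterate k hx
  have h_image : Tendsto (fun k => g (g^[k] x)) atTop (𝓝 (g p)) :=
    (hg p hp).tendsto.comp (tendsto_nhdsWithin_iff.2 ⟨h, .of_forall h_orbit⟩)
  have h_shift : Tendsto (fun k => g (g^[k] x)) atTop (𝓝 p) := by
    simpa only [comp_def, ← iterate_succ_apply' g] using h.comp (tendsto_add_atTop_nat 1)
  exact tendsto_nhds_unique h_image h_shift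

section Preorder

variable {α : Type*} [Preorder α] {g : α → α} {s : Set α} {x : α}

theorem MonotoneOn.monotone_iterate_of_le_map (hg : MonotoneOn g s) (hs : MapsTo g s s)
    (hx : x ∈ s) (hxg : x ≤ g x) : Monotone fun k => g^[k] x := by
  have h_restrict : Monotone (hs.restrict g s s) := fun u v huv => hg u.2 v.2 huv
  have h_val : Monotone (Subtype.val : s → α) := fun _ _ h => h
  simpa only [comp_def, hs.coe_iterate_restrict] using
    h_val.comp (h_restrict.monotone_iterate_of_le_map (x := ⟨x, hx⟩) hxg)

theorem MonotoneOn.antitone_iterate_of_map_le (hg : MonotoneOn g s) (hs : MapsTo g s s)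
    (hx : x ∈ s) (hgx : g x ≤ x) : Antitone fun k => g^[k] x :=
  MonotoneOn.monotone_iterate_of_le_map (α := αᵒᵈ) hg.dual hs hx hgx

end Preorder

section Order

variable {α : Type*} [ConditionallyCompleteLinearOrder α] [TopologicalSpace α] [OrderTopology α]
  {g : α → α} {a b x : α}

theorem exists_isFixedPt_tendsto_iterate_of_monotoneOn (hg : ContinuousOn g (Icc a b))
    (hmono : MonotoneOn g (Icc a b)) (hmap : MapsTo g (Icc a b) (Icc a b)) (hx : x ∈ Icc a b) :
    ∃ p ∈ Icc a b, IsFixedPt g p ∧ Tendsto (fun k => g^[k] x) atTop (𝓝 p) := by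
  have h_orbit : ∀ k, g^[k] x ∈ Icc a b := fun k => hmap.iterate k hx
  obtain ⟨p, hp⟩ : ∃ p, Tendsto (fun k => g^[k] x) atTop (𝓝 p) := by
    rcases le_total x (g x) with hxg | hgx
    · exact ⟨_, tendsto_atTop_ciSup (hmono.monotone_iterate_of_le_map hmap hx hxg)
        ⟨b, forall_mem_range.2 fun k => (h_orbit k).2⟩⟩
    · exact ⟨_, tendsto_atTop_ciInf (hmono.antitone_iterate_of_map_le hmap hx hgx)
        ⟨a, forall_mem_range.2 fun k => (h_orbit k).1⟩⟩
  have hp_mem : p ∈ Icc a b := isClosed_Icc.mem_of_tendsto hp (.of_forall h_orbit)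
  exact ⟨p, hp_mem, hg.isFixedPt_of_tendsto_iterate hmap hx hp_mem hp, hp⟩

theorem ContinuousOn.monotoneOn_iterate_two_of_injOn [DenselyOrdered α] (hab : a ≤ b)
    (hg : ContinuousOn g (Icc a b)) (hinj : InjOn g (Icc a b))
    (hmap : MapsTo g (Icc a b) (Icc a b)) : MonotoneOn (g^[2]) (Icc a b) := by
  rcases hg.strictMonoOn_of_injOn_Icc' hab hinj with hmono | hanti
  · exact hmono.monotoneOn.comp hmono.monotoneOn hmap
  · exact hanti.antitoneOn.comp hanti.antitoneOn hmap

end Order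

theorem exists_frequently_mod_eq (φ : ℕ → ℕ) {N : ℕ} (hN : 0 < N) :
    ∃ r < N, ∃ᶠ k in atTop, φ k % N = r :=
  (finite_Iio N).frequently_exists.1 <| .of_forall fun _ => ⟨_, Nat.mod_lt _ hN, rfl⟩

theorem omegaLimitPt_eq_of_tendsto_iterate_mul {f : ℝ → ℝ} {s : Set ℝ} (hf : ContinuousOn f s)
    (hs : MapsTo f s s) {x p : ℝ} (hx : x ∈ s) (hp : p ∈ s) {N : ℕ} (hN : 0 < N)
    (h : Tendsto (fun k => f^[N * k] x) atTop (𝓝 p)) :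
    omegaLimitPt f x = {y | ∃ i : ℕ, y = f^[i] p} := by
  have h_residue : ∀ i, Tendsto (fun k => f^[i + N * k] x) atTop (𝓝 (f^[i] p)) := by
    intro i
    have h_within : Tendsto (fun k => f^[N * k] x) atTop (𝓝[s] p) :=
      tendsto_nhdsWithin_iff.2 ⟨h, .of_forall fun k => hs.iterate _ hx⟩
    simpa only [comp_def, iterate_add_apply] using ((hf.iterate hs i) p hp).tendsto.comp h_within
  ext y
  constructor
  · rintro ⟨φ, hφ, hy⟩
    obtain ⟨r, -, hr⟩ := exists_frequently_mod_eq φ hN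
    obtain ⟨ψ, hψ, hψr⟩ := extraction_of_frequently_atTop hr
    have h_quot : Tendsto (fun k => φ (ψ k) / N) atTop atTop :=
      (Nat.tendsto_div_const_atTop hN.ne').comp (hφ.comp hψ).tendsto_atTop
    have h_split : ∀ k, φ (ψ k) = r + N * (φ (ψ k) / N) := fun k => by
      rw [← hψr k, Nat.mod_add_div]
    refine ⟨r, tendsto_nhds_unique (hy.comp hψ.tendsto_atTop) ?_⟩
    exact ((h_residue r).comp h_quot).congr fun k => by simp only [comp_apply, ← h_split]
  · rintro ⟨i, rfl⟩
    exact ⟨fun k => i + N * k, (strictMono_mul_left_of_pos hN).const_add i, h_residue i⟩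

theorem omegaLimit_periodic_of_iterate_injOn_mapsTo_general
    (f : ℝ → ℝ) (hf : ContinuousOn f (Icc 0 1)) (hmaps : MapsTo f (Icc 0 1) (Icc 0 1))
    (a b : ℝ) (hI : Icc a b ⊆ Icc 0 1)
    (n : ℕ) (hn : 1 ≤ n)
    (hinj : InjOn (f^[n]) (Icc a b))
    (hmap : MapsTo (f^[n]) (Icc a b) (Icc a b)) :
    ∀ x ∈ Icc a b, IsPeriodicOrbitSet f (omegaLimitPt f x) := by
  intro x hx
  have hg : ContinuousOn (f^[n]) (Icc a b) := (hf.iterate hmaps n).mono hI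
  obtain ⟨p, hp, hfix, htend⟩ := exists_isFixedPt_tendsto_iterate_of_monotoneOn
    (hg.iterate hmap 2) (hg.monotoneOn_iterate_two_of_injOn (hx.1.trans hx.2) hinj hmap)
    (hmap.iterate 2) hx
  simp only [← iterate_mul] at hfix htend
  exact ⟨p, n * 2, by omega, hfix,
    omegaLimitPt_eq_of_tendsto_iterate_mul hf hmaps (hI hx) (hI hp) (by omega) htend⟩

/-- If `f : [0,1] → [0,1]` is continuous and some iterate `f^n` maps a closed
interval `I ⊆ [0,1]` homeomorphically into itself, then every point of `I`
has a periodic omega-limit set. -/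
theorem omegaLimit_periodic_of_iterate_injOn_mapsTo
    (f : ℝ → ℝ) (hf : ContinuousOn f (Icc 0 1)) (hmaps : MapsTo f (Icc 0 1) (Icc 0 1))
    (a b : ℝ) (hab : a ≤ b) (hI : Icc a b ⊆ Icc 0 1)
    (n : ℕ) (hn : 1 ≤ n)
    (hinj : InjOn (f^[n]) (Icc a b))
    (hmap : MapsTo (f^[n]) (Icc a b) (Icc a b)) :
    ∀ x ∈ Icc a b, IsPeriodicOrbitSet f (omegaLimitPt f x) :=
  omegaLimit_periodic_of_iterate_injOn_mapsTo_general f hf hmaps a b hI n hn hinj hmap
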